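/- Let ν, ν̃ ∈ ℓ¹(ℕ), Λ, Λ̃ ∈ ℓ¹(ℕ×ℕ), and a sequence ((n_k,m_k))_{k≥1} in ℕ×ℕ. Define Λ^{(k)} := Φ^ν_{n_k,m_k}(Λ^{(k−1)}) with Λ^{(0)} = Λ, and similarly Λ̃^{(k)} with ν̃, Λ̃. Set ε := ‖Λ − Λ̃‖₁ + ‖ν − ν̃‖₁. Then for all k: ‖Λ^{(k)} − Λ̃^{(k)}‖₁ + ‖ν − ν̃‖₁ ≤ 3^k ε. -/

import Mathlib

/-!
The correction term `α^ν_{n,m}(Λ)` is built from three quantities, `-g n`, `g m` and an infimum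
of partial sums of `g`, where `g = ν - λ_{*,·}` is the column excess. Each is 1-Lipschitz in `g`
for the ℓ¹ norm, and `Λ ↦ λ_{*,·}` contracts ℓ¹, so `|α − α̃| ≤ ‖Λ − Λ̃‖₁ + ‖ν − ν̃‖₁`.
Since `Φ` only moves the mass `α` from `(n, n)` to `(n, m)`, one step gives
`‖Φ Λ − Φ̃ Λ̃‖₁ + ‖ν − ν̃‖₁ ≤ 3 (‖Λ − Λ̃‖₁ + ‖ν − ν̃‖₁)`, and the bound `3^k ε` follows by induction.
-/

open scoped BigOperators
open Filter

/-- A set `R ⊆ ℕ` is upward closed w.r.t. the relation `r`. -/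
def UpClosed (r : ℕ → ℕ → Prop) (R : Set ℕ) : Prop :=
  ∀ x ∈ R, ∀ y, r x y → y ∈ R

/-- The family `𝓡_{n,m}` of upward closed sets containing `m` but not `n`. -/
def Rfam (r : ℕ → ℕ → Prop) (n m : ℕ) : Set (Set ℕ) :=
  {R | UpClosed r R ∧ n ∉ R ∧ m ∈ R}

/-- The `l`-th column sum `λ_{*,l}` of a matrix. -/
noncomputable def colSum (Λ : ℕ × ℕ → ℝ) (l : ℕ) : ℝ := ∑' k, Λ (k, l)

/-- Sum of a sequence over a subset of `ℕ`. -/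
noncomputable def setSum (f : ℕ → ℝ) (R : Set ℕ) : ℝ := ∑' l : R, f l

/-- `inf_{R ∈ 𝓡_{n,m}} ∑_{l∈R} (ν_l − λ_{*,l})`. -/
noncomputable def infR (r : ℕ → ℕ → Prop) (ν : ℕ → ℝ) (Λ : ℕ × ℕ → ℝ) (n m : ℕ) : ℝ :=
  sInf ((fun R => setSum (fun l => ν l - colSum Λ l) R) '' Rfam r n m)

open Classical in
/-- The correction term of Nawrotzki's algorithm. -/
noncomputable def alpha (r : ℕ → ℕ → Prop) (ν : ℕ → ℝ) (n m : ℕ) (Λ : ℕ × ℕ → ℝ) : ℝ :=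
  if r n m then
    (if 0 < min (colSum Λ n - ν n) (min (ν m - colSum Λ m) (infR r ν Λ n m))
      then min (colSum Λ n - ν n) (min (ν m - colSum Λ m) (infR r ν Λ n m)) else 0)
  else 0

/-- The Nawrotzki update map `Φ^ν_{n,m}`. -/
noncomputable def Phi (r : ℕ → ℕ → Prop) (ν : ℕ → ℝ) (n m : ℕ) (Λ : ℕ × ℕ → ℝ) :
    ℕ × ℕ → ℝ :=
  fun p => if p = (n, n) then Λ p - alpha r ν n m Λ
    else if p = (n, m) then Λ p + alpha r ν n m Λ
    else Λ p

/-- The set `S(Λ)` of pairs where the correction term is positive. -/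
def Sset (r : ℕ → ℕ → Prop) (ν : ℕ → ℝ) (Λ : ℕ × ℕ → ℝ) : Set (ℕ × ℕ) :=
  {p | 0 < alpha r ν p.1 p.2 Λ}

/-- The diagonal matrix built from a sequence. -/
noncomputable def diagMat (μ : ℕ → ℝ) : ℕ × ℕ → ℝ :=
  fun p => if p.1 = p.2 then μ p.1 else 0


section RealSeries

variable {ι : Type*} {f g : ι → ℝ}

lemma abs_tsum_le_tsum_abs (hf : Summable f) : |∑' i, f i| ≤ ∑' i, |f i| :=
  norm_tsum_le_tsum_norm (f := f) hf.abs

lemma tsum_abs_sub_le (hf : Summable f) (hg : Summable g) :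
    ∑' i, |f i - g i| ≤ ∑' i, |f i| + ∑' i, |g i| := by
  rw [← hf.abs.tsum_add hg.abs]
  exact (hf.sub hg).abs.tsum_le_tsum (fun i => abs_sub _ _) (hf.abs.add hg.abs)

end RealSeries

lemma abs_sInf_image_sub_sInf_image_le {α : Type*} {F G : α → ℝ} {S : Set α} {ε : ℝ}
    (hε : 0 ≤ ε) (hF : BddBelow (F '' S)) (hG : BddBelow (G '' S))
    (h : ∀ x ∈ S, |F x - G x| ≤ ε) :
    |sInf (F '' S) - sInf (G '' S)| ≤ ε := by
  rcases S.eq_empty_or_nonempty with rfl | hS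
  · simpa using hε
  have key : ∀ {F G : α → ℝ}, BddBelow (F '' S) → (∀ x ∈ S, F x ≤ G x + ε) →
      sInf (F '' S) - ε ≤ sInf (G '' S) := fun hF h =>
    le_csInf (hS.image _) <| by
      rintro _ ⟨x, hx, rfl⟩
      linarith [csInf_le hF ⟨x, hx, rfl⟩, h x hx]
  rw [abs_sub_le_iff]
  constructor
  · linarith [key (F := F) (G := G) hF fun x hx => by linarith [abs_sub_le_iff.mp (h x hx)]]
  · linarith [key (F := G) (G := F) hG fun x hx => by linarith [abs_sub_le_iff.mp (h x hx)]]

section SetSum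

variable {f g : ℕ → ℝ}

lemma abs_setSum_le (hf : Summable f) (R : Set ℕ) : |setSum f R| ≤ ∑' l, |f l| :=
  (abs_tsum_le_tsum_abs (hf.subtype R)).trans
    (hf.abs.tsum_subtype_le _ R fun _ => abs_nonneg _)

lemma abs_setSum_sub_setSum_le (hf : Summable f) (hg : Summable g) (R : Set ℕ) :
    |setSum f R - setSum g R| ≤ ∑' l, |f l - g l| := by
  have hsub : setSum f R - setSum g R = setSum (f - g) R :=
    ((hf.subtype R).tsum_sub (hg.subtype R)).symm
  rw [hsub]
  exact abs_setSum_le (f := f - g) (hf.sub hg) R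

lemma bddBelow_setSum_image (hf : Summable f) (𝓡 : Set (Set ℕ)) :
    BddBelow ((setSum f) '' 𝓡) :=
  ⟨-∑' l, |f l|, by
    rintro _ ⟨R, -, rfl⟩
    exact neg_le_of_abs_le (abs_setSum_le hf R)⟩

lemma abs_sInf_setSum_sub_sInf_setSum_le (hf : Summable f) (hg : Summable g)
    (𝓡 : Set (Set ℕ)) :
    |sInf ((setSum f) '' 𝓡) - sInf ((setSum g) '' 𝓡)| ≤ ∑' l, |f l - g l| :=
  abs_sInf_image_sub_sInf_image_le (tsum_nonneg fun _ => abs_nonneg _)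
    (bddBelow_setSum_image hf 𝓡) (bddBelow_setSum_image hg 𝓡)
    fun R _ => abs_setSum_sub_setSum_le hf hg R

end SetSum

section ColSum

variable {Λ Λ' : ℕ × ℕ → ℝ}

lemma summable_column (hΛ : Summable Λ) (l : ℕ) : Summable fun k => Λ (k, l) :=
  hΛ.comp_injective (Prod.mk_left_injective l)

lemma summable_colSum (hΛ : Summable Λ) : Summable (colSum Λ) :=
  (hΛ.comp_injective Prod.swap_injective).prod

lemma colSum_sub (hΛ : Summable Λ) (hΛ' : Summable Λ') :
    colSum (Λ - Λ') = colSum Λ - colSum Λ' :=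
  funext fun l => (summable_column hΛ l).tsum_sub (summable_column hΛ' l)

lemma tsum_abs_colSum_le (hΛ : Summable Λ) : ∑' l, |colSum Λ l| ≤ ∑' p, |Λ p| := by
  have hcol : Summable fun l => ∑' k, |Λ (k, l)| := summable_colSum hΛ.abs
  calc ∑' l, |colSum Λ l|
      ≤ ∑' l, ∑' k, |Λ (k, l)| :=
        (summable_colSum hΛ).abs.tsum_le_tsum
          (fun l => abs_tsum_le_tsum_abs (summable_column hΛ l)) hcol
    _ = ∑' k, ∑' l, |Λ (k, l)| := hΛ.abs.tsum_comm (f := fun k l => |Λ (k, l)|)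
    _ = ∑' p, |Λ p| := hΛ.abs.tsum_prod.symm

end ColSum

lemma tsum_abs_sub_colSum_sub_le {ν ν' : ℕ → ℝ} {Λ Λ' : ℕ × ℕ → ℝ} (hν : Summable ν)
    (hν' : Summable ν') (hΛ : Summable Λ) (hΛ' : Summable Λ') :
    ∑' l, |(ν l - colSum Λ l) - (ν' l - colSum Λ' l)|
      ≤ ∑' p, |Λ p - Λ' p| + ∑' l, |ν l - ν' l| := by
  calc ∑' l, |(ν l - colSum Λ l) - (ν' l - colSum Λ' l)|
      = ∑' l, |(ν - ν') l - colSum (Λ - Λ') l| := by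
        rw [colSum_sub hΛ hΛ']
        exact tsum_congr fun l => by simp only [Pi.sub_apply]; ring_nf
    _ ≤ ∑' l, |(ν - ν') l| + ∑' l, |colSum (Λ - Λ') l| :=
        tsum_abs_sub_le (hν.sub hν') (summable_colSum (hΛ.sub hΛ'))
    _ ≤ ∑' l, |(ν - ν') l| + ∑' p, |(Λ - Λ') p| := by
        gcongr
        exact tsum_abs_colSum_le (hΛ.sub hΛ')
    _ = ∑' p, |Λ p - Λ' p| + ∑' l, |ν l - ν' l| := add_comm _ _

lemma alpha_of_not {r : ℕ → ℕ → Prop} {n m : ℕ} (h : ¬ r n m) (ν : ℕ → ℝ) (Λ : ℕ × ℕ → ℝ) :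
    alpha r ν n m Λ = 0 := by
  simp only [alpha, h, if_false]

lemma alpha_of {r : ℕ → ℕ → Prop} {n m : ℕ} (h : r n m) (ν : ℕ → ℝ) (Λ : ℕ × ℕ → ℝ) :
    alpha r ν n m Λ
      = max (min (colSum Λ n - ν n) (min (ν m - colSum Λ m) (infR r ν Λ n m))) 0 := by
  simp only [alpha, h, if_true, max_def_lt']

lemma abs_alpha_sub_alpha_le (r : ℕ → ℕ → Prop) {ν ν' : ℕ → ℝ} {Λ Λ' : ℕ × ℕ → ℝ}
    (hν : Summable ν) (hν' : Summable ν') (hΛ : Summable Λ) (hΛ' : Summable Λ') (n m : ℕ) :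
    |alpha r ν n m Λ - alpha r ν' n m Λ'| ≤ ∑' p, |Λ p - Λ' p| + ∑' l, |ν l - ν' l| := by
  set g := fun l => ν l - colSum Λ l
  set g' := fun l => ν' l - colSum Λ' l
  have hg : Summable g := hν.sub (summable_colSum hΛ)
  have hg' : Summable g' := hν'.sub (summable_colSum hΛ')
  have hcoord : ∀ l, |g l - g' l| ≤ ∑' l, |g l - g' l| := fun l =>
    (hg.sub hg').abs.le_tsum l fun _ _ => abs_nonneg _
  have hinf : |infR r ν Λ n m - infR r ν' Λ' n m| ≤ ∑' l, |g l - g' l| :=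
    abs_sInf_setSum_sub_sInf_setSum_le hg hg' _
  refine le_trans ?_ (tsum_abs_sub_colSum_sub_le hν hν' hΛ hΛ')
  by_cases h : r n m
  · rw [alpha_of h, alpha_of h]
    refine (abs_max_sub_max_le_abs _ _ _).trans <| (abs_min_sub_min_le_max _ _ _ _).trans <|
      max_le ?_ <| (abs_min_sub_min_le_max _ _ _ _).trans <| max_le (hcoord m) hinf
    have hn : (colSum Λ n - ν n) - (colSum Λ' n - ν' n) = -(g n - g' n) := by ring
    rw [hn, abs_neg]
    exact hcoord n
  · rw [alpha_of_not h, alpha_of_not h, sub_zero, abs_zero]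
    exact tsum_nonneg fun l => abs_nonneg (g l - g' l)

section TransferMass

variable {α : Type*} [DecidableEq α] (i j : α)

def transferMass (a : ℝ) (Λ : α → ℝ) : α → ℝ :=
  fun p => if p = i then Λ p - a else if p = j then Λ p + a else Λ p

lemma transferMass_sub_transferMass (a b : ℝ) (Λ Λ' : α → ℝ) :
    transferMass i j a Λ - transferMass i j b Λ' = transferMass i j (a - b) (Λ - Λ') := by
  ext p
  simp only [transferMass, Pi.sub_apply]
  split_ifs <;> ring

lemma abs_transferMass_le (a : ℝ) (Λ : α → ℝ) (p : α) :
    |transferMass i j a Λ p|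
      ≤ |Λ p| + ((if p = i then |a| else 0) + (if p = j then |a| else 0)) := by
  simp only [transferMass]
  split_ifs <;> linarith [abs_sub (Λ p) a, abs_add_le (Λ p) a, abs_nonneg a]

variable {Λ : α → ℝ}

lemma hasSum_transferMass_majorant (hΛ : Summable Λ) (a : ℝ) :
    HasSum (fun p => |Λ p| + ((if p = i then |a| else 0) + (if p = j then |a| else 0)))
      (∑' p, |Λ p| + (|a| + |a|)) :=
  hΛ.abs.hasSum.add ((hasSum_ite_eq i |a|).add (hasSum_ite_eq j |a|))

lemma summable_transferMass (hΛ : Summable Λ) (a : ℝ) : Summable (transferMass i j a Λ) :=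
  (Summable.of_nonneg_of_le (fun _ => abs_nonneg _) (abs_transferMass_le i j a Λ)
    (hasSum_transferMass_majorant i j hΛ a).summable).of_abs

lemma tsum_abs_transferMass_le (hΛ : Summable Λ) (a : ℝ) :
    ∑' p, |transferMass i j a Λ p| ≤ ∑' p, |Λ p| + 2 * |a| :=
  (hasSum_le (abs_transferMass_le i j a Λ) (summable_transferMass i j hΛ a).abs.hasSum
    (hasSum_transferMass_majorant i j hΛ a)).trans_eq (by ring)

end TransferMass

lemma Phi_eq_transferMass (r : ℕ → ℕ → Prop) (ν : ℕ → ℝ) (n m : ℕ) (Λ : ℕ × ℕ → ℝ) :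
    Phi r ν n m Λ = transferMass (n, n) (n, m) (alpha r ν n m Λ) Λ :=
  rfl

lemma tsum_abs_Phi_sub_Phi_add_le (r : ℕ → ℕ → Prop) {ν ν' : ℕ → ℝ} {Λ Λ' : ℕ × ℕ → ℝ}
    (hν : Summable ν) (hν' : Summable ν') (hΛ : Summable Λ) (hΛ' : Summable Λ') (n m : ℕ) :
    ∑' p, |Phi r ν n m Λ p - Phi r ν' n m Λ' p| + ∑' l, |ν l - ν' l|
      ≤ 3 * (∑' p, |Λ p - Λ' p| + ∑' l, |ν l - ν' l|) := by
  have hPhi := tsum_abs_transferMass_le (n, n) (n, m) (Λ := Λ - Λ') (hΛ.sub hΛ')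
    (alpha r ν n m Λ - alpha r ν' n m Λ')
  rw [← transferMass_sub_transferMass] at hPhi
  simp only [Pi.sub_apply] at hPhi
  have hα := abs_alpha_sub_alpha_le r hν hν' hΛ hΛ' n m
  have hν_nonneg : 0 ≤ ∑' l, |ν l - ν' l| := tsum_nonneg fun _ => abs_nonneg _
  rw [Phi_eq_transferMass, Phi_eq_transferMass]
  linarith

theorem iterates_perturbation (r : ℕ → ℕ → Prop)
    (ν ν' : ℕ → ℝ) (hν : Summable fun n => |ν n|) (hν' : Summable fun n => |ν' n|)
    (Λ Λ' : ℕ × ℕ → ℝ) (hΛ : Summable fun p => |Λ p|) (hΛ' : Summable fun p => |Λ' p|)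
    (nm : ℕ → ℕ × ℕ)
    (Ls Ls' : ℕ → ℕ × ℕ → ℝ)
    (h0 : Ls 0 = Λ) (h0' : Ls' 0 = Λ')
    (hrec : ∀ k, Ls (k + 1) = Phi r ν (nm k).1 (nm k).2 (Ls k))
    (hrec' : ∀ k, Ls' (k + 1) = Phi r ν' (nm k).1 (nm k).2 (Ls' k)) :
    ∀ k, (∑' p, |Ls k p - Ls' k p|) + (∑' l, |ν l - ν' l|) ≤
      3 ^ k * ((∑' p, |Λ p - Λ' p|) + ∑' l, |ν l - ν' l|) := by
  have hLs : ∀ k, Summable (Ls k) ∧ Summable (Ls' k) := by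
    intro k
    induction k with
    | zero => exact ⟨h0 ▸ hΛ.of_abs, h0' ▸ hΛ'.of_abs⟩
    | succ k ih =>
      rw [hrec, hrec', Phi_eq_transferMass, Phi_eq_transferMass]
      exact ⟨summable_transferMass _ _ ih.1 _, summable_transferMass _ _ ih.2 _⟩
  intro k
  induction k with
  | zero => simp [h0, h0']
  | succ k ih =>
    rw [hrec, hrec', pow_succ', mul_assoc]
    exact (tsum_abs_Phi_sub_Phi_add_le r hν.of_abs hν'.of_abs (hLs k).1 (hLs k).2 _ _).trans
      (by gcongr)
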